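/- Let G be a finite simple locally bipartite graph that contains no copy of H₀. Then for every vertex v of G, the set D_v = {u : the pair u, v is dense} is an independent set of vertices of G. -/

import Mathlib

open SimpleGraph

/-- A finite simple graph is *locally bipartite* if each neighbourhood induces a
bipartite (equivalently, 2-colourable) graph. -/
def LocallyBipartite {V : Type*} (G : SimpleGraph V) : Prop :=
  ∀ v : V, (G.induce (G.neighborSet v)).Colorable 2

/-- `C̄₇`, the complement of the 7-cycle: `i` and `j` are adjacent iff they differ by
`±2` or `±3` modulo 7. -/
def C7bar : SimpleGraph (ZMod 7) :=
  SimpleGraph.fromRel (fun i j => j = i + 2 ∨ j = i + 3)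

/-- `H₀`, the Moser spindle: the 7-cycle `v₀v₁…v₆` together with the edges
`v₀v₂`, `v₀v₅`, `v₁v₃`, `v₄v₆`. -/
def H0 : SimpleGraph (ZMod 7) :=
  SimpleGraph.fromRel (fun i j =>
    j = i + 1 ∨ (i = 0 ∧ j = 2) ∨ (i = 0 ∧ j = 5) ∨ (i = 1 ∧ j = 3) ∨ (i = 4 ∧ j = 6))

/-- `H₁`: the 7-cycle `v₀v₁…v₆` together with the edges
`v₃v₅`, `v₅v₀`, `v₀v₂`, `v₂v₄`, `v₆v₁`. -/
def H1 : SimpleGraph (ZMod 7) :=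
  SimpleGraph.fromRel (fun i j =>
    j = i + 1 ∨ (i = 3 ∧ j = 5) ∨ (i = 5 ∧ j = 0) ∨ (i = 0 ∧ j = 2) ∨
      (i = 2 ∧ j = 4) ∨ (i = 6 ∧ j = 1))

/-- `H₂`: the 7-cycle `v₀v₁…v₆` together with the edges
`v₁v₃`, `v₃v₅`, `v₅v₀`, `v₀v₂`, `v₂v₄`, `v₄v₆`. -/
def H2 : SimpleGraph (ZMod 7) :=
  SimpleGraph.fromRel (fun i j =>
    j = i + 1 ∨ (i = 1 ∧ j = 3) ∨ (i = 3 ∧ j = 5) ∨ (i = 5 ∧ j = 0) ∨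
      (i = 0 ∧ j = 2) ∨ (i = 2 ∧ j = 4) ∨ (i = 4 ∧ j = 6))

/-- `H₂⁺`: the graph `H₂` (on the `some` vertices) together with an extra vertex
(`none`) joined to exactly `v₀`, `v₂` and `v₅`. -/
def H2plus : SimpleGraph (Option (ZMod 7)) :=
  SimpleGraph.fromRel (fun a b =>
    match a, b with
    | some i, some j =>
        j = i + 1 ∨ (i = 1 ∧ j = 3) ∨ (i = 3 ∧ j = 5) ∨ (i = 5 ∧ j = 0) ∨
          (i = 0 ∧ j = 2) ∨ (i = 2 ∧ j = 4) ∨ (i = 4 ∧ j = 6)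
    | none, some j => j = 0 ∨ j = 2 ∨ j = 5
    | _, _ => False)

/-- A graph `G` contains a copy of `H` if there is an injective graph homomorphism
from `H` to `G`, i.e. `G` has a (not necessarily induced) subgraph isomorphic to `H`. -/
def ContainsCopy {W V : Type*} (H : SimpleGraph W) (G : SimpleGraph V) : Prop :=
  ∃ f : H →g G, Function.Injective f

/-- A pair of vertices `u, v` is *dense* if the common neighbourhood of `u` and `v`
contains an edge. -/
def DensePair {V : Type*} (G : SimpleGraph V) (u v : V) : Prop :=
  ∃ x y : V, G.Adj u x ∧ G.Adj v x ∧ G.Adj u y ∧ G.Adj v y ∧ G.Adj x y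

/-- A pair of distinct vertices `u, v` is *sparse* if `u` and `v` are not adjacent and
the common neighbourhood of `u` and `v` contains no edge. -/
def SparsePair {V : Type*} (G : SimpleGraph V) (u v : V) : Prop :=
  u ≠ v ∧ ¬ G.Adj u v ∧ ¬ DensePair G u v

/-- A set of vertices is independent if it contains no edge. -/
def IsIndepSet {V : Type*} (G : SimpleGraph V) (s : Set V) : Prop :=
  ∀ ⦃u⦄, u ∈ s → ∀ ⦃v⦄, v ∈ s → ¬ G.Adj u v

/-!
If `u₁ ~ u₂` are both dense with `v`, witnessed by edges `ab` in `Γ(u₁) ∩ Γ(v)` and `cd` in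
`Γ(u₂) ∩ Γ(v)`, local bipartiteness rules out a triangle in `Γ(v)`, so `u₁, u₂ ≁ v`, and a
5-cycle in the neighbourhood of a vertex shared by `{a, b}` and `{c, d}`, so these are disjoint.
The seven vertices `v, a, b, u₁, u₂, c, d` then span a Moser spindle.
-/

theorem SimpleGraph.Hom.injective_of_ne_of_not_adj {W V : Type*} {H : SimpleGraph W}
    {G : SimpleGraph V} (f : H →g G) (h : ∀ i j, i ≠ j → ¬ H.Adj i j → f i ≠ f j) :
    Function.Injective f := by
  intro i j hij
  by_contra hne
  by_cases hadj : H.Adj i j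
  · exact (f.map_adj hadj).ne hij
  · exact h i j hne hadj hij

theorem SimpleGraph.induce_neighborSet_adj {V : Type*} {G : SimpleGraph V} {a x y : V}
    (hx : G.Adj a x) (hy : G.Adj a y) (hxy : G.Adj x y) :
    (G.induce (G.neighborSet a)).Adj ⟨x, hx⟩ ⟨y, hy⟩ :=
  hxy

instance : DecidableRel H0.Adj := fun i j =>
  decidable_of_iff' _ (fromRel_adj _ i j)

theorem containsCopy_H0 {V : Type*} {G : SimpleGraph V} {v₀ v₁ v₂ v₃ v₄ v₅ v₆ : V}
    (h₀₁ : G.Adj v₀ v₁) (h₁₂ : G.Adj v₁ v₂) (h₂₃ : G.Adj v₂ v₃) (h₃₄ : G.Adj v₃ v₄)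
    (h₄₅ : G.Adj v₄ v₅) (h₅₆ : G.Adj v₅ v₆) (h₆₀ : G.Adj v₆ v₀)
    (h₀₂ : G.Adj v₀ v₂) (h₀₅ : G.Adj v₀ v₅) (h₁₃ : G.Adj v₁ v₃) (h₄₆ : G.Adj v₄ v₆)
    (n₀₃ : v₀ ≠ v₃) (n₀₄ : v₀ ≠ v₄) (n₁₄ : v₁ ≠ v₄) (n₁₅ : v₁ ≠ v₅) (n₁₆ : v₁ ≠ v₆)
    (n₂₄ : v₂ ≠ v₄) (n₂₅ : v₂ ≠ v₅) (n₂₆ : v₂ ≠ v₆) (n₃₅ : v₃ ≠ v₅) (n₃₆ : v₃ ≠ v₆) :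
    ContainsCopy H0 G := by
  have hcases : ∀ i : ZMod 7, i = 0 ∨ i = 1 ∨ i = 2 ∨ i = 3 ∨ i = 4 ∨ i = 5 ∨ i = 6 := by
    decide
  refine ⟨_, Hom.injective_of_ne_of_not_adj ⟨![v₀, v₁, v₂, v₃, v₄, v₅, v₆], fun {i j} hij => ?_⟩
    fun i j hne hij => ?_⟩ <;>
  rcases hcases i with rfl | rfl | rfl | rfl | rfl | rfl | rfl <;>
  rcases hcases j with rfl | rfl | rfl | rfl | rfl | rfl | rfl <;>
  first
    | exact absurd hij (by decide) | exact absurd rfl hne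
    | assumption | exact G.adj_symm ‹_› | exact Ne.symm ‹_›

namespace LocallyBipartite

variable {V : Type*} {G : SimpleGraph V}

theorem even_length_of_loop (hG : LocallyBipartite G) {a : V} {x : G.neighborSet a}
    (w : (G.induce (G.neighborSet a)).Walk x x) : Even w.length :=
  two_colorable_iff_forall_loop_even.mp (hG a) x w

theorem not_triangle_in_neighborSet (hG : LocallyBipartite G) {a x y z : V}
    (hx : G.Adj a x) (hy : G.Adj a y) (hz : G.Adj a z)
    (hxy : G.Adj x y) (hyz : G.Adj y z) (hzx : G.Adj z x) : False := by
  have := hG.even_length_of_loop <| .cons (induce_neighborSet_adj hx hy hxy) <|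
    .cons (induce_neighborSet_adj hy hz hyz) <| .cons (induce_neighborSet_adj hz hx hzx) .nil
  exact (by decide : ¬ Even 3) this

theorem not_pentagon_in_neighborSet (hG : LocallyBipartite G) {a x₀ x₁ x₂ x₃ x₄ : V}
    (h₀ : G.Adj a x₀) (h₁ : G.Adj a x₁) (h₂ : G.Adj a x₂) (h₃ : G.Adj a x₃) (h₄ : G.Adj a x₄)
    (h₀₁ : G.Adj x₀ x₁) (h₁₂ : G.Adj x₁ x₂) (h₂₃ : G.Adj x₂ x₃) (h₃₄ : G.Adj x₃ x₄)
    (h₄₀ : G.Adj x₄ x₀) : False := by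
  have := hG.even_length_of_loop <| .cons (induce_neighborSet_adj h₀ h₁ h₀₁) <|
    .cons (induce_neighborSet_adj h₁ h₂ h₁₂) <| .cons (induce_neighborSet_adj h₂ h₃ h₂₃) <|
    .cons (induce_neighborSet_adj h₃ h₄ h₃₄) <| .cons (induce_neighborSet_adj h₄ h₀ h₄₀) .nil
  exact (by decide : ¬ Even 5) this

theorem not_adj_of_densePair (hG : LocallyBipartite G) {u v : V} (h : DensePair G u v) :
    ¬ G.Adj u v := by
  obtain ⟨x, y, hux, hvx, huy, hvy, hxy⟩ := h
  exact fun huv => hG.not_triangle_in_neighborSet huv.symm hvx hvy hux hxy huy.symm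

theorem witness_ne_witness_of_adj (hG : LocallyBipartite G) {u₁ u₂ v a b c d : V}
    (hu : G.Adj u₁ u₂) (hu₁a : G.Adj u₁ a) (hva : G.Adj v a) (hu₁b : G.Adj u₁ b)
    (hvb : G.Adj v b) (hab : G.Adj a b) (hu₂c : G.Adj u₂ c) (hvc : G.Adj v c)
    (hu₂d : G.Adj u₂ d) (hvd : G.Adj v d) (hcd : G.Adj c d) : a ≠ c := by
  rintro rfl
  exact hG.not_pentagon_in_neighborSet hab hva.symm hcd hu₂c.symm hu₁a.symm
    hvb.symm hvd hu₂d.symm hu.symm hu₁b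

end LocallyBipartite

theorem densePair_set_independent_general {V : Type}
    (G : SimpleGraph V)
    (hLB : LocallyBipartite G)
    (hH0 : ¬ ContainsCopy H0 G) (v : V) :
    _root_.IsIndepSet G {u : V | DensePair G u v} := by
  intro u₁ hu₁ u₂ hu₂ hu
  have hu₁v := hLB.not_adj_of_densePair hu₁
  have hu₂v := hLB.not_adj_of_densePair hu₂
  obtain ⟨a, b, hu₁a, hva, hu₁b, hvb, hab⟩ := hu₁
  obtain ⟨c, d, hu₂c, hvc, hu₂d, hvd, hcd⟩ := hu₂
  have hvu₁ : v ≠ u₁ := by rintro rfl; exact hu₂v hu.symm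
  have hvu₂ : v ≠ u₂ := by rintro rfl; exact hu₁v hu
  have hac := hLB.witness_ne_witness_of_adj hu hu₁a hva hu₁b hvb hab hu₂c hvc hu₂d hvd hcd
  have had := hLB.witness_ne_witness_of_adj hu hu₁a hva hu₁b hvb hab hu₂d hvd hu₂c hvc hcd.symm
  have hbc := hLB.witness_ne_witness_of_adj hu hu₁b hvb hu₁a hva hab.symm hu₂c hvc hu₂d hvd hcd
  have hbd := hLB.witness_ne_witness_of_adj hu hu₁b hvb hu₁a hva hab.symm hu₂d hvd hu₂c hvc
    hcd.symm
  exact hH0 <| containsCopy_H0 hva hab hu₁b.symm hu hu₂c hcd hvd.symm hvb hvc hu₁a.symm hu₂d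
    hvu₁ hvu₂ (G.ne_of_adj_of_not_adj hva.symm hu₂v) hac had
    (G.ne_of_adj_of_not_adj hvb.symm hu₂v) hbc hbd
    (G.ne_of_adj_of_not_adj hvc.symm hu₁v).symm (G.ne_of_adj_of_not_adj hvd.symm hu₁v).symm

/-- In a locally bipartite graph containing no copy of `H₀`, for each vertex `v` the set
of vertices forming a dense pair with `v` is independent. -/
theorem densePair_set_independent {V : Type} [Fintype V]
    (G : SimpleGraph V)
    (hLB : LocallyBipartite G)
    (hH0 : ¬ ContainsCopy H0 G) (v : V) :
    _root_.IsIndepSet G {u : V | DensePair G u v} :=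
  densePair_set_independent_general G hLB hH0 v
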